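/- arXiv:2312.05604 — 2 statements merged into one kernel-verified Lean document; each statement's English description precedes it below -/
import Mathlib

section
/- Let C = C_λ^{d−1} ⊂ ℝ^{d−1} be the (d−1)-fold product Cantor set. Define u_C(x) = (1/2)·sgn(x_d)·ρ(x), where ρ ∈ C^∞(ℝ^d ∖ (C × {0})) satisfies 1_{{d(x̄,C) ≤ 2|x_d|}} ≤ ρ ≤ 1_{{d(x̄,C) ≤ 4|x_d|}} and |∇ρ| ≤ c|x_d|^{−1} 1_{{2|x_d| ≤ d(x̄,C) ≤ 4|x_d|}}. Then for all y, z ∈ ℝ^d: |u_C(y) − u_C(z)| ≤ C·[ 1_{{|y−z| ≥ (|y_d|+|z_d|)/4}} (1_{M_4}(y) + 1_{M_4}(z)) + 1_{{|y−z| ≤ (|y_d|+|z_d|)/4}} 1_{M_8}(y) 1_{M_8}(z) · |y−z|/(|y_d|+|z_d|) ]. -/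
open MeasureTheory Set Metric Filter
open scoped Pointwise ENNReal

/-- Stages of the middle-`(1-2l)` Cantor construction on `[-1/2, 1/2]`. -/
def cantorStageMid (l : ℝ) : ℕ → Set ℝ
  | 0 => Set.Icc (-(1/2 : ℝ)) (1/2)
  | (k+1) => (fun x => l * x - (1 - l)/2) '' cantorStageMid l k ∪
      (fun x => l * x + (1 - l)/2) '' cantorStageMid l k

/-- The middle-`(1-2l)` Cantor set. -/
def cantorSetMid (l : ℝ) : Set ℝ := ⋂ k, cantorStageMid l k

private lemma ite_nonneg' (p : Prop) [Decidable p] : (0:ℝ) ≤ if p then 1 else 0 := by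
  split <;> norm_num

private lemma ite_le_one' (p : Prop) [Decidable p] : (if p then (1:ℝ) else 0) ≤ 1 := by
  split <;> norm_num

private lemma abs_sign_le (t : ℝ) : |Real.sign t| ≤ 1 := by
  rcases lt_trichotomy t 0 with h|h|h
  · rw [Real.sign_of_neg h]; norm_num
  · rw [h, Real.sign_zero]; norm_num
  · rw [Real.sign_of_pos h]; norm_num

private lemma key_mvt {E : Type*} [NormedAddCommGroup E] [NormedSpace ℝ E]
    (ρ : E × ℝ → ℝ)
    (hsm : ContDiffOn ℝ (⊤ : ℕ∞) ρ {x : E × ℝ | x.2 ≠ 0})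
    {s : Set (E × ℝ)} (hs : Convex ℝ s) (hs0 : ∀ x ∈ s, x.2 ≠ 0)
    {K : ℝ} (hK : ∀ x ∈ s, ‖fderiv ℝ ρ x‖ ≤ K)
    {y z : E × ℝ} (hy : y ∈ s) (hz : z ∈ s) :
    |ρ y - ρ z| ≤ K * dist y z := by
  have hopen : IsOpen {x : E × ℝ | x.2 ≠ 0} :=
    isOpen_ne.preimage (continuous_snd : Continuous (Prod.snd : E × ℝ → ℝ))
  have hdo : DifferentiableOn ℝ ρ {x : E × ℝ | x.2 ≠ 0} := hsm.differentiableOn (by simp)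
  have hdiff : ∀ x ∈ s, DifferentiableAt ℝ ρ x := fun x hx =>
    hdo.differentiableAt (hopen.mem_nhds (hs0 x hx))
  have := hs.norm_image_sub_le_of_norm_fderiv_le hdiff hK hz hy
  rwa [Real.norm_eq_abs, ← dist_eq_norm] at this

/-- Pointwise difference bound for the subcritical competitor
`u_C(x) = (1/2) sgn(x_d) ρ(x)` built over the product Cantor set `C_l^{d-1} × {0}`. -/
theorem stmt_7 (d : ℕ) (hd : 2 ≤ d) (l : ℝ) (hl : l ∈ Set.Ioo (0:ℝ) (1/2))
    (C0 : Set (EuclideanSpace ℝ (Fin (d-1))))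
    (hC0 : C0 = {x : EuclideanSpace ℝ (Fin (d-1)) | ∀ i, x i ∈ cantorSetMid l})
    (ρ : (EuclideanSpace ℝ (Fin (d-1)) × ℝ) → ℝ)
    (hρ1 : ∀ x : EuclideanSpace ℝ (Fin (d-1)) × ℝ,
      (if Metric.infDist x.1 C0 ≤ 2 * |x.2| then (1:ℝ) else 0) ≤ ρ x)
    (hρ2 : ∀ x : EuclideanSpace ℝ (Fin (d-1)) × ℝ,
      ρ x ≤ (if Metric.infDist x.1 C0 ≤ 4 * |x.2| then (1:ℝ) else 0))
    (hsmooth : ContDiffOn ℝ (⊤ : ℕ∞) ρ {x : EuclideanSpace ℝ (Fin (d-1)) × ℝ |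
      ¬(x.1 ∈ C0 ∧ x.2 = 0)})
    (c₁ : ℝ)
    (hgrad : ∀ x : EuclideanSpace ℝ (Fin (d-1)) × ℝ,
      ‖fderiv ℝ ρ x‖ ≤ c₁ * |x.2|⁻¹ *
        (if 2 * |x.2| ≤ Metric.infDist x.1 C0 ∧ Metric.infDist x.1 C0 ≤ 4 * |x.2|
          then (1:ℝ) else 0)) :
    ∃ C : ℝ, 0 < C ∧ ∀ y z : EuclideanSpace ℝ (Fin (d-1)) × ℝ,
      |(1/2) * Real.sign y.2 * ρ y - (1/2) * Real.sign z.2 * ρ z| ≤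
        C * ((if (|y.2| + |z.2|)/4 ≤ dist y z then (1:ℝ) else 0) *
              ((if Metric.infDist y.1 C0 ≤ 4 * |y.2| then (1:ℝ) else 0) +
               (if Metric.infDist z.1 C0 ≤ 4 * |z.2| then (1:ℝ) else 0)) +
             (if dist y z ≤ (|y.2| + |z.2|)/4 then (1:ℝ) else 0) *
              (if Metric.infDist y.1 C0 ≤ 8 * |y.2| then (1:ℝ) else 0) *
              (if Metric.infDist z.1 C0 ≤ 8 * |z.2| then (1:ℝ) else 0) *
              (dist y z / (|y.2| + |z.2|))) := by
  classical
  obtain ⟨c', hc'def⟩ : ∃ c' : ℝ, c' = max c₁ 0 := ⟨_, rfl⟩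
  have c'0 : (0:ℝ) ≤ c' := hc'def ▸ le_max_right _ _
  have hc1c' : c₁ ≤ c' := hc'def ▸ le_max_left _ _
  refine ⟨2 * c' + 1, by nlinarith, ?_⟩
  have hρ0 : ∀ w, 0 ≤ ρ w := fun w => le_trans (ite_nonneg' _) (hρ1 w)
  have hzero : ∀ w : EuclideanSpace ℝ (Fin (d-1)) × ℝ, ¬(Metric.infDist w.1 C0 ≤ 4 * |w.2|) → ρ w = 0 := by
    intro w h
    have h2 := hρ2 w
    rw [if_neg h] at h2
    exact le_antisymm h2 (hρ0 w)
  have habs : ∀ w : EuclideanSpace ℝ (Fin (d-1)) × ℝ, |(1/2 : ℝ) * Real.sign w.2 * ρ w| ≤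
      (1/2) * (if Metric.infDist w.1 C0 ≤ 4 * |w.2| then (1:ℝ) else 0) := by
    intro w
    rw [abs_mul, abs_mul]
    have h1 : |Real.sign w.2| ≤ 1 := abs_sign_le _
    have h2 : |ρ w| ≤ (if Metric.infDist w.1 C0 ≤ 4 * |w.2| then (1:ℝ) else 0) := by
      rw [abs_of_nonneg (hρ0 w)]; exact hρ2 w
    have h3 : |(1/2 : ℝ)| = 1/2 := by norm_num
    rw [h3]
    nlinarith [abs_nonneg (Real.sign w.2), abs_nonneg (ρ w),
      ite_nonneg' (Metric.infDist w.1 C0 ≤ 4 * |w.2|)]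
  have hsm' : ContDiffOn ℝ (⊤ : ℕ∞) ρ {x : EuclideanSpace ℝ (Fin (d-1)) × ℝ | x.2 ≠ 0} :=
    hsmooth.mono (fun x hx hc => hx hc.2)
  -- the step lemma: transfer M4 membership to M8 membership of a nearby point
  have step : ∀ p q : EuclideanSpace ℝ (Fin (d-1)) × ℝ, Metric.infDist q.1 C0 ≤ 4 * |q.2| →
      dist p q ≤ (|p.2| + |q.2|)/4 → Metric.infDist p.1 C0 ≤ 8 * |p.2| := by
    intro p q h4 hD
    have h1 : Metric.infDist p.1 C0 ≤ Metric.infDist q.1 C0 + dist p.1 q.1 :=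
      infDist_le_infDist_add_dist
    have h2 : dist p.1 q.1 ≤ dist p q := by
      rw [Prod.dist_eq]; exact le_max_left _ _
    have h3 : |p.2 - q.2| ≤ dist p q := by
      rw [← Real.dist_eq]; rw [Prod.dist_eq]; exact le_max_right _ _
    have h5 : |q.2| - |p.2| ≤ |q.2 - p.2| := abs_sub_abs_le_abs_sub _ _
    have h5' : |q.2 - p.2| = |p.2 - q.2| := abs_sub_comm _ _
    have h6 := abs_nonneg p.2
    linarith
  intro y z
  rcases le_or_gt ((|y.2| + |z.2|)/4) (dist y z) with hA | hB
  · -- far apart case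
    rw [if_pos hA]
    have hy4 := habs y
    have hz4 := habs z
    have htri : |(1/2 : ℝ) * Real.sign y.2 * ρ y - (1/2) * Real.sign z.2 * ρ z| ≤
        |(1/2 : ℝ) * Real.sign y.2 * ρ y| + |(1/2 : ℝ) * Real.sign z.2 * ρ z| := by
      rw [sub_eq_add_neg]
      exact (abs_add_le _ _).trans (by rw [abs_neg])
    have hQ : (0:ℝ) ≤ (if dist y z ≤ (|y.2| + |z.2|)/4 then (1:ℝ) else 0) *
        (if Metric.infDist y.1 C0 ≤ 8 * |y.2| then (1:ℝ) else 0) *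
        (if Metric.infDist z.1 C0 ≤ 8 * |z.2| then (1:ℝ) else 0) *
        (dist y z / (|y.2| + |z.2|)) := by
      have := div_nonneg (dist_nonneg (x := y) (y := z))
        (by positivity : (0:ℝ) ≤ |y.2| + |z.2|)
      exact mul_nonneg (mul_nonneg (mul_nonneg (ite_nonneg' _) (ite_nonneg' _))
        (ite_nonneg' _)) this
    nlinarith [ite_nonneg' (Metric.infDist y.1 C0 ≤ 4 * |y.2|),
      ite_nonneg' (Metric.infDist z.1 C0 ≤ 4 * |z.2|)]
  · -- close case
    rw [if_neg (not_le.2 hB), if_pos hB.le]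
    by_cases heq : (1/2 : ℝ) * Real.sign y.2 * ρ y = (1/2) * Real.sign z.2 * ρ z
    · rw [heq, sub_self, abs_zero]
      have hQ : (0:ℝ) ≤ (1:ℝ) *
          (if Metric.infDist y.1 C0 ≤ 8 * |y.2| then (1:ℝ) else 0) *
          (if Metric.infDist z.1 C0 ≤ 8 * |z.2| then (1:ℝ) else 0) *
          (dist y z / (|y.2| + |z.2|)) := by
        have := div_nonneg (dist_nonneg (x := y) (y := z))
          (by positivity : (0:ℝ) ≤ |y.2| + |z.2|)
        exact mul_nonneg (mul_nonneg (mul_nonneg zero_le_one (ite_nonneg' _))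
          (ite_nonneg' _)) this
      nlinarith [ite_nonneg' (Metric.infDist y.1 C0 ≤ 4 * |y.2|),
        ite_nonneg' (Metric.infDist z.1 C0 ≤ 4 * |z.2|)]
    · have hsnd : |y.2 - z.2| ≤ dist y z := by
        rw [← Real.dist_eq]; rw [Prod.dist_eq]; exact le_max_right _ _
      have hS : 0 < |y.2| + |z.2| := by
        rcases lt_or_ge 0 (|y.2| + |z.2|) with h | h
        · exact h
        · exfalso
          have hy0 : y.2 = 0 := by
            have := abs_nonneg y.2; have := abs_nonneg z.2
            exact abs_eq_zero.mp (le_antisymm (by linarith) (abs_nonneg _))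
          have hz0 : z.2 = 0 := by
            have := abs_nonneg y.2; have := abs_nonneg z.2
            exact abs_eq_zero.mp (le_antisymm (by linarith) (abs_nonneg _))
          exact heq (by rw [hy0, hz0, Real.sign_zero]; ring)
      have hy2 : y.2 ≠ 0 := by
        intro h0
        have h1 : |z.2| ≤ dist y z := by
          have := hsnd; rw [h0, zero_sub, abs_neg] at this; exact this
        have h2 := hB
        rw [h0, abs_zero, zero_add] at h2
        have := abs_nonneg z.2
        linarith
      have hz2 : z.2 ≠ 0 := by
        intro h0
        have h1 : |y.2| ≤ dist y z := by
          have := hsnd; rw [h0, sub_zero] at this; exact this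
        have h2 := hB
        rw [h0, abs_zero, add_zero] at h2
        have := abs_nonneg y.2
        linarith
      have hsign : (0 < y.2 ∧ 0 < z.2) ∨ (y.2 < 0 ∧ z.2 < 0) := by
        rcases lt_or_gt_of_ne hy2 with h | h <;> rcases lt_or_gt_of_ne hz2 with h' | h'
        · exact Or.inr ⟨h, h'⟩
        · exfalso
          have e1 : |y.2 - z.2| = -(y.2 - z.2) := abs_of_neg (by linarith)
          rw [abs_of_neg h, abs_of_pos h'] at hB
          linarith
        · exfalso
          have e1 : |y.2 - z.2| = y.2 - z.2 := abs_of_pos (by linarith)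
          rw [abs_of_pos h, abs_of_neg h'] at hB
          linarith
        · exact Or.inl ⟨h, h'⟩
      have hρne : ρ y ≠ ρ z := by
        intro h
        apply heq
        rcases hsign with ⟨hy', hz'⟩ | ⟨hy', hz'⟩
        · rw [Real.sign_of_pos hy', Real.sign_of_pos hz', h]
        · rw [Real.sign_of_neg hy', Real.sign_of_neg hz', h]
      have h88 : Metric.infDist y.1 C0 ≤ 8 * |y.2| ∧ Metric.infDist z.1 C0 ≤ 8 * |z.2| := by
        have hone : Metric.infDist y.1 C0 ≤ 4 * |y.2| ∨ Metric.infDist z.1 C0 ≤ 4 * |z.2| := by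
          by_contra h
          push_neg at h
          exact hρne (by rw [hzero y (not_le.2 h.1), hzero z (not_le.2 h.2)])
        rcases hone with h | h
        · refine ⟨le_trans h (by nlinarith [abs_nonneg y.2]), ?_⟩
          exact step z y h (by rw [dist_comm]; linarith [hB.le])
        · refine ⟨?_, le_trans h (by nlinarith [abs_nonneg z.2])⟩
          exact step y z h hB.le
      rw [if_pos h88.1, if_pos h88.2]
      -- the minimum of the vertical coordinates is at least S/4
      have hm : (|y.2| + |z.2|)/4 ≤ min |y.2| |z.2| := by
        have e1 := abs_sub_abs_le_abs_sub y.2 z.2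
        have e2 := abs_sub_abs_le_abs_sub z.2 y.2
        have e3 : |z.2 - y.2| = |y.2 - z.2| := abs_sub_comm _ _
        rcases le_total |y.2| |z.2| with h | h
        · rw [min_eq_left h]; linarith
        · rw [min_eq_right h]; linarith
      have hm0 : 0 < min |y.2| |z.2| := lt_of_lt_of_le (by linarith) hm
      obtain ⟨m, hmdef⟩ : ∃ m : ℝ, m = min |y.2| |z.2| := ⟨_, rfl⟩
      rw [← hmdef] at hm hm0
      -- MVT on a sign-definite convex half-space
      have hbnd : ∀ (s : Set (EuclideanSpace ℝ (Fin (d-1)) × ℝ)), Convex ℝ s → (∀ x ∈ s, m ≤ |x.2|) →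
          y ∈ s → z ∈ s → |ρ y - ρ z| ≤ c' * m⁻¹ * dist y z := by
        intro s hconv hsabs hys hzs
        refine key_mvt ρ hsm' hconv (fun x hx => ?_) (fun x hx => ?_) hys hzs
        · intro h0
          have := hsabs x hx
          rw [h0, abs_zero] at this
          linarith
        · have h1 := hgrad x
          have hx2 : m ≤ |x.2| := hsabs x hx
          have hinv : |x.2|⁻¹ ≤ m⁻¹ := inv_anti₀ hm0 hx2
          have t0 : (0:ℝ) ≤ |x.2|⁻¹ := inv_nonneg.2 (abs_nonneg _)
          have m0 : (0:ℝ) ≤ m⁻¹ := inv_nonneg.2 hm0.le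
          have I0 := ite_nonneg' (2 * |x.2| ≤ Metric.infDist x.1 C0 ∧
            Metric.infDist x.1 C0 ≤ 4 * |x.2|)
          have I1 := ite_le_one' (2 * |x.2| ≤ Metric.infDist x.1 C0 ∧
            Metric.infDist x.1 C0 ≤ 4 * |x.2|)
          calc ‖fderiv ℝ ρ x‖ ≤ c₁ * |x.2|⁻¹ *
              (if 2 * |x.2| ≤ Metric.infDist x.1 C0 ∧ Metric.infDist x.1 C0 ≤ 4 * |x.2|
                then (1:ℝ) else 0) := h1
            _ ≤ c' * |x.2|⁻¹ *
              (if 2 * |x.2| ≤ Metric.infDist x.1 C0 ∧ Metric.infDist x.1 C0 ≤ 4 * |x.2|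
                then (1:ℝ) else 0) :=
              mul_le_mul_of_nonneg_right (mul_le_mul_of_nonneg_right hc1c' t0) I0
            _ ≤ c' * |x.2|⁻¹ * 1 :=
              mul_le_mul_of_nonneg_left I1 (mul_nonneg c'0 t0)
            _ = c' * |x.2|⁻¹ := mul_one _
            _ ≤ c' * m⁻¹ := mul_le_mul_of_nonneg_left hinv c'0
      have key : |ρ y - ρ z| ≤ c' * m⁻¹ * dist y z ∧
          |(1/2 : ℝ) * Real.sign y.2 * ρ y - (1/2) * Real.sign z.2 * ρ z| =
            (1/2) * |ρ y - ρ z| := by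
        rcases hsign with ⟨hy', hz'⟩ | ⟨hy', hz'⟩
        · constructor
          · refine hbnd {x : EuclideanSpace ℝ (Fin (d-1)) × ℝ | min y.2 z.2 ≤ x.2} ?_ ?_ ?_ ?_
            · exact convex_halfSpace_ge
                (LinearMap.snd ℝ (EuclideanSpace ℝ (Fin (d-1))) ℝ).isLinear _
            · intro x hx
              have hx' : min y.2 z.2 ≤ x.2 := hx
              have : m = min y.2 z.2 := by
                rw [hmdef, abs_of_pos hy', abs_of_pos hz']
              rw [this]
              exact le_trans hx' (le_abs_self _)
            · show min y.2 z.2 ≤ y.2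
              exact min_le_left _ _
            · show min y.2 z.2 ≤ z.2
              exact min_le_right _ _
          · rw [Real.sign_of_pos hy', Real.sign_of_pos hz']
            have e : (1/2 : ℝ) * 1 * ρ y - (1/2) * 1 * ρ z = (1/2) * (ρ y - ρ z) := by ring
            rw [e, abs_mul]
            norm_num
        · constructor
          · refine hbnd {x : EuclideanSpace ℝ (Fin (d-1)) × ℝ | x.2 ≤ max y.2 z.2} ?_ ?_ ?_ ?_
            · exact convex_halfSpace_le
                (LinearMap.snd ℝ (EuclideanSpace ℝ (Fin (d-1))) ℝ).isLinear _
            · intro x hx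
              have hx' : x.2 ≤ max y.2 z.2 := hx
              have hM : max y.2 z.2 < 0 := max_lt hy' hz'
              have hxneg : x.2 < 0 := lt_of_le_of_lt hx' hM
              have e : m = min (-y.2) (-z.2) := by
                rw [hmdef, abs_of_neg hy', abs_of_neg hz']
              have e2 : |x.2| = -x.2 := abs_of_neg hxneg
              rw [e, e2]
              rcases le_total (-y.2) (-z.2) with h | h
              · rw [min_eq_left h]
                have : max y.2 z.2 = y.2 := max_eq_left (by linarith)
                linarith [hx'.trans_eq this]
              · rw [min_eq_right h]
                have : max y.2 z.2 = z.2 := max_eq_right (by linarith)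
                linarith [hx'.trans_eq this]
            · show y.2 ≤ max y.2 z.2
              exact le_max_left _ _
            · show z.2 ≤ max y.2 z.2
              exact le_max_right _ _
          · rw [Real.sign_of_neg hy', Real.sign_of_neg hz']
            have e : (1/2 : ℝ) * (-1) * ρ y - (1/2) * (-1) * ρ z =
                -((1/2) * (ρ y - ρ z)) := by ring
            rw [e, abs_neg, abs_mul]
            norm_num
      obtain ⟨hkey, hLHS⟩ := key
      rw [hLHS]
      have h7 : m⁻¹ ≤ 4 / (|y.2| + |z.2|) := by
        have := inv_anti₀ (by linarith : (0:ℝ) < (|y.2| + |z.2|)/4) hm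
        rwa [inv_div] at this
      have hds : (0:ℝ) ≤ dist y z / (|y.2| + |z.2|) :=
        div_nonneg dist_nonneg hS.le
      have hSne : (|y.2| + |z.2|) ≠ 0 := hS.ne'
      calc (1/2 : ℝ) * |ρ y - ρ z| ≤ (1/2) * (c' * m⁻¹ * dist y z) := by linarith
        _ ≤ (1/2) * (c' * (4 / (|y.2| + |z.2|)) * dist y z) := by
            have : c' * m⁻¹ * dist y z ≤ c' * (4 / (|y.2| + |z.2|)) * dist y z :=
              mul_le_mul_of_nonneg_right (mul_le_mul_of_nonneg_left h7 c'0) dist_nonneg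
            linarith
        _ = 2 * c' * (dist y z / (|y.2| + |z.2|)) := by
            field_simp
            ring
        _ ≤ (2 * c' + 1) * ((0:ℝ) * ((if Metric.infDist y.1 C0 ≤ 4 * |y.2| then (1:ℝ) else 0) +
              (if Metric.infDist z.1 C0 ≤ 4 * |z.2| then (1:ℝ) else 0)) +
              1 * 1 * 1 * (dist y z / (|y.2| + |z.2|))) := by
            nlinarith
end

section
/- Let σ > −(d − 𝔇) where 𝔇 = (d−1)log 2/log(1/λ) is the dimension of C_λ^{d−1}, and let M_4 = {z ∈ (−1,1)^d : d(z̄, C_λ^{d−1}) ≤ 4|z_d|}. Then ∫_{(−1,1)^d} |z_d|^σ · 1_{M_4}(z) dz < ∞. -/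
open MeasureTheory Set Metric Filter
open scoped Pointwise ENNReal

lemma neg_half_mem_cantorStageMid (l : ℝ) : ∀ k, (-(1/2) : ℝ) ∈ cantorStageMid l k
  | 0 => by simp [cantorStageMid]
  | (k+1) => Or.inl ⟨-(1/2), neg_half_mem_cantorStageMid l k, by ring⟩

lemma cantorSetMid_nonempty (l : ℝ) : (cantorSetMid l).Nonempty :=
  ⟨-(1/2), Set.mem_iInter.2 (neg_half_mem_cantorStageMid l)⟩

lemma cantorStageMid_compact (l : ℝ) : ∀ k, IsCompact (cantorStageMid l k)
  | 0 => isCompact_Icc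
  | (k+1) => ((cantorStageMid_compact l k).image (by fun_prop)).union
      ((cantorStageMid_compact l k).image (by fun_prop))

lemma cantorSetMid_subset (l : ℝ) (k : ℕ) : cantorSetMid l ⊆ cantorStageMid l k :=
  Set.iInter_subset _ k

lemma cantorStageMid_cover {l : ℝ} (hl0 : 0 ≤ l) (k : ℕ) :
    ∃ s : Finset ℝ, s.card ≤ 2 ^ k ∧ cantorStageMid l k ⊆ ⋃ a ∈ s, Icc a (a + l ^ k) := by
  induction k with
  | zero =>
    refine ⟨{-(1/2)}, by simp, ?_⟩
    intro x hx
    simp only [Finset.mem_singleton, Set.mem_iUnion]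
    simp only [cantorStageMid] at hx
    exact ⟨-(1/2), rfl, ⟨by linarith [hx.1], by linarith [hx.2]⟩⟩
  | succ k ih =>
    obtain ⟨s, hcard, hsub⟩ := ih
    refine ⟨s.image (fun a => l * a - (1 - l)/2) ∪ s.image (fun a => l * a + (1 - l)/2), ?_, ?_⟩
    · calc (s.image (fun a => l * a - (1 - l)/2) ∪ s.image (fun a => l * a + (1 - l)/2)).card
          ≤ (s.image (fun a => l * a - (1 - l)/2)).card
            + (s.image (fun a => l * a + (1 - l)/2)).card := Finset.card_union_le _ _
        _ ≤ 2 ^ k + 2 ^ k := add_le_add ((Finset.card_image_le).trans hcard)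
            ((Finset.card_image_le).trans hcard)
        _ = 2 ^ (k + 1) := by ring
    · rintro x (⟨y, hy, rfl⟩ | ⟨y, hy, rfl⟩) <;>
      · obtain ⟨a, ha, hya⟩ := Set.mem_iUnion₂.1 (hsub hy)
        rw [Set.mem_iUnion₂]
        have h1 := mul_le_mul_of_nonneg_left hya.1 hl0
        have h2 := mul_le_mul_of_nonneg_left hya.2 hl0
        have h3 : l * (a + l ^ k) = l * a + l ^ (k + 1) := by ring
        first
        | exact ⟨l * a - (1 - l)/2, Finset.mem_union_left _ (Finset.mem_image_of_mem _ ha),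
            ⟨by linarith, by linarith⟩⟩
        | exact ⟨l * a + (1 - l)/2, Finset.mem_union_right _ (Finset.mem_image_of_mem _ ha),
            ⟨by linarith, by linarith⟩⟩

lemma le_infDist' {α : Type*} [PseudoMetricSpace α] {s : Set α} {x : α} {c : ℝ}
    (hs : s.Nonempty) (h : ∀ y ∈ s, c ≤ dist x y) : c ≤ infDist x s := by
  by_contra hc
  push_neg at hc
  obtain ⟨y, hy, hlt⟩ := (infDist_lt_iff hs).1 hc
  exact (h y hy).not_gt hlt

lemma cantor_nbhd_measure_le {l : ℝ} (hl0 : 0 ≤ l) {r : ℝ} (_hr : 0 ≤ r) (k : ℕ) :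
    volume {x : ℝ | infDist x (cantorSetMid l) ≤ r}
      ≤ ENNReal.ofReal ((2:ℝ) ^ k * (l ^ k + 2 * r)) := by
  obtain ⟨s, hcard, hsub⟩ := cantorStageMid_cover hl0 k
  have hC : (cantorSetMid l).Nonempty := cantorSetMid_nonempty l
  have hsubset : {x : ℝ | infDist x (cantorSetMid l) ≤ r}
      ⊆ ⋃ a ∈ s, Icc (a - r) (a + l ^ k + r) := by
    intro x hx
    have h1 : infDist x (cantorStageMid l k) ≤ r :=
      le_trans (infDist_le_infDist_of_subset (cantorSetMid_subset l k) hC) hx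
    obtain ⟨y, hy, hyd⟩ := (cantorStageMid_compact l k).exists_infDist_eq_dist
      ⟨-(1/2), neg_half_mem_cantorStageMid l k⟩ x
    rw [hyd] at h1
    obtain ⟨a, ha, hya⟩ := Set.mem_iUnion₂.1 (hsub hy)
    have hd : |x - y| ≤ r := by rwa [Real.dist_eq] at h1
    rw [abs_le] at hd
    exact Set.mem_iUnion₂.2 ⟨a, ha, ⟨by linarith [hya.1], by linarith [hya.2]⟩⟩
  calc volume {x : ℝ | infDist x (cantorSetMid l) ≤ r}
      ≤ volume (⋃ a ∈ s, Icc (a - r) (a + l ^ k + r)) := measure_mono hsubset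
    _ ≤ ∑ a ∈ s, volume (Icc (a - r) (a + l ^ k + r)) := measure_biUnion_finset_le s _
    _ = ∑ _a ∈ s, ENNReal.ofReal (l ^ k + 2 * r) := by
        refine Finset.sum_congr rfl fun a _ => ?_
        rw [Real.volume_Icc]
        ring_nf
    _ = s.card * ENNReal.ofReal (l ^ k + 2 * r) := by
        rw [Finset.sum_const, nsmul_eq_mul]
    _ ≤ (2:ℝ≥0∞) ^ k * ENNReal.ofReal (l ^ k + 2 * r) := by
        have hc : (s.card : ℝ≥0∞) ≤ (2:ℝ≥0∞) ^ k := by exact_mod_cast hcard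
        exact mul_le_mul_left hc _
    _ = ENNReal.ofReal ((2:ℝ) ^ k * (l ^ k + 2 * r)) := by
        rw [ENNReal.ofReal_mul (by positivity), ENNReal.ofReal_pow (by norm_num)]
        norm_num

lemma cantor_nbhd_measure_rpow {l : ℝ} (hl : l ∈ Set.Ioo (0:ℝ) (1/2)) {r : ℝ}
    (hr0 : 0 < r) (hr4 : r ≤ 4) :
    volume {x : ℝ | infDist x (cantorSetMid l) ≤ r}
      ≤ ENNReal.ofReal (9 * r ^ (1 - Real.log 2 / Real.log (1/l))) := by
  obtain ⟨hl0, hl2⟩ := hl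
  set D : ℝ := Real.log 2 / Real.log (1/l) with hD
  have hlog : Real.log (1/l) = -Real.log l := by rw [one_div, Real.log_inv]
  have hll : Real.log l < 0 := Real.log_neg hl0 (by linarith)
  have hlog2pos : (0:ℝ) < Real.log 2 := Real.log_pos (by norm_num)
  have hD0 : 0 < D := div_pos hlog2pos (by rw [hlog]; linarith)
  have hD1 : D < 1 := by
    rw [hD, div_lt_one (by rw [hlog]; linarith), hlog]
    have hmul : Real.log 2 + Real.log l = Real.log (2*l) :=
      (Real.log_mul (by norm_num) (ne_of_gt hl0)).symm
    have h2l : Real.log (2*l) < 0 := Real.log_neg (by linarith) (by linarith)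
    linarith
  rcases le_or_gt 1 r with h1 | h1
  · refine (cantor_nbhd_measure_le hl0.le hr0.le 0).trans ?_
    apply ENNReal.ofReal_le_ofReal
    have hge : (1:ℝ) ≤ r ^ (1 - D) := Real.one_le_rpow h1 (by linarith)
    simp only [pow_zero, one_mul]
    nlinarith
  · set k := ⌈Real.log r / Real.log l⌉₊ with hk
    have hlr : Real.log r < 0 := Real.log_neg hr0 h1
    have hratio : 0 ≤ Real.log r / Real.log l := div_nonneg_of_nonpos hlr.le hll.le
    have hkge : Real.log r / Real.log l ≤ (k:ℝ) := Nat.le_ceil _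
    have hkle : (k:ℝ) ≤ Real.log r / Real.log l + 1 := by
      have := Nat.ceil_lt_add_one hratio
      linarith
    have hlk : l ^ k ≤ r := by
      have hmul : (k:ℝ) * Real.log l ≤ Real.log r := by
        have h := mul_le_mul_of_nonpos_right hkge hll.le
        rwa [div_mul_cancel₀ _ (ne_of_lt hll)] at h
      calc l ^ k = Real.exp (Real.log l) ^ k := by rw [Real.exp_log hl0]
        _ = Real.exp ((k:ℝ) * Real.log l) := by rw [← Real.exp_nat_mul]
        _ ≤ Real.exp (Real.log r) := Real.exp_le_exp.2 hmul
        _ = r := Real.exp_log hr0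
    have h2k : (2:ℝ) ^ k ≤ 2 * r ^ (-D) := by
      have hDneg : -D = Real.log 2 / Real.log l := by
        rw [hD, hlog]
        field_simp
      have hmul : (k:ℝ) * Real.log 2 ≤ Real.log 2 + Real.log r * (Real.log 2 / Real.log l) := by
        have h := mul_le_mul_of_nonneg_right hkle hlog2pos.le
        calc (k:ℝ) * Real.log 2 ≤ (Real.log r / Real.log l + 1) * Real.log 2 := h
          _ = Real.log 2 + Real.log r * (Real.log 2 / Real.log l) := by ring
      calc (2:ℝ) ^ k = Real.exp (Real.log 2) ^ k := by rw [Real.exp_log (by norm_num)]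
        _ = Real.exp ((k:ℝ) * Real.log 2) := by rw [← Real.exp_nat_mul]
        _ ≤ Real.exp (Real.log 2 + Real.log r * (Real.log 2 / Real.log l)) :=
            Real.exp_le_exp.2 hmul
        _ = 2 * r ^ (-D) := by
            rw [Real.exp_add, Real.exp_log (by norm_num : (0:ℝ) < 2),
              Real.rpow_def_of_pos hr0, hDneg]
    refine (cantor_nbhd_measure_le hl0.le hr0.le k).trans ?_
    apply ENNReal.ofReal_le_ofReal
    have hrD : 0 ≤ r ^ (-D) := Real.rpow_nonneg hr0.le _
    have hstep : (2:ℝ) ^ k * (l ^ k + 2 * r) ≤ (2 * r ^ (-D)) * (3 * r) := by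
      apply mul_le_mul h2k (by linarith) (by positivity) (by positivity)
    calc (2:ℝ) ^ k * (l ^ k + 2 * r) ≤ (2 * r ^ (-D)) * (3 * r) := hstep
      _ = 6 * (r ^ (-D) * r ^ (1:ℝ)) := by rw [Real.rpow_one]; ring
      _ = 6 * r ^ (1 - D) := by rw [← Real.rpow_add hr0]; ring_nf
      _ ≤ 9 * r ^ (1 - D) := by
          have : 0 ≤ r ^ (1 - D) := Real.rpow_nonneg hr0.le _
          linarith

lemma pi_nbhd_subset {l : ℝ} {m : ℕ} {r : ℝ} :
    {x : Fin m → ℝ | infDist x {y : Fin m → ℝ | ∀ i, y i ∈ cantorSetMid l} ≤ r}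
      ⊆ Set.pi Set.univ (fun _ : Fin m => {t : ℝ | infDist t (cantorSetMid l) ≤ r}) := by
  intro x hx i _
  have hx' : infDist x {y : Fin m → ℝ | ∀ i, y i ∈ cantorSetMid l} ≤ r := hx
  show infDist (x i) (cantorSetMid l) ≤ r
  refine le_trans ?_ hx'
  have hPne : Set.Nonempty {y : Fin m → ℝ | ∀ i, y i ∈ cantorSetMid l} :=
    ⟨fun _ => -(1/2), fun _ => Set.mem_iInter.2 (neg_half_mem_cantorStageMid l)⟩
  apply le_infDist' hPne
  intro p hp
  exact (infDist_le_dist_of_mem (hp i)).trans (dist_le_pi_dist x p i)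

lemma pi_nbhd_measure_le {l : ℝ} (hl : l ∈ Set.Ioo (0:ℝ) (1/2)) {m : ℕ} {r : ℝ}
    (hr0 : 0 < r) (hr4 : r ≤ 4) :
    volume {x : Fin m → ℝ | infDist x {y : Fin m → ℝ | ∀ i, y i ∈ cantorSetMid l} ≤ r}
      ≤ (ENNReal.ofReal (9 * r ^ (1 - Real.log 2 / Real.log (1/l)))) ^ m := by
  calc volume {x : Fin m → ℝ | infDist x {y : Fin m → ℝ | ∀ i, y i ∈ cantorSetMid l} ≤ r}
      ≤ volume (Set.pi Set.univ (fun _ : Fin m => {t : ℝ | infDist t (cantorSetMid l) ≤ r})) :=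
        measure_mono pi_nbhd_subset
    _ = ∏ _i : Fin m, volume {t : ℝ | infDist t (cantorSetMid l) ≤ r} := volume_pi_pi _
    _ = volume {t : ℝ | infDist t (cantorSetMid l) ≤ r} ^ m := by
        rw [Finset.prod_const, Finset.card_univ, Fintype.card_fin]
    _ ≤ (ENNReal.ofReal (9 * r ^ (1 - Real.log 2 / Real.log (1/l)))) ^ m := by
        gcongr
        exact cantor_nbhd_measure_rpow hl hr0 hr4

lemma lintegral_abs_rpow_lt_top {p : ℝ} (hp : -1 < p) (K : ℝ) :
    ∫⁻ t in Set.Ioo (-1:ℝ) 1, ENNReal.ofReal (K * |t| ^ p) < ⊤ := by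
  have hIoo : IntegrableOn (fun t : ℝ => K * t ^ p) (Set.Ioo (0:ℝ) 1) :=
    ((intervalIntegral.integrableOn_Ioo_rpow_iff one_pos).2 hp).const_mul K
  have hpos : (∫⁻ t in Set.Ioo (0:ℝ) 1, ENNReal.ofReal (K * |t| ^ p)) < ⊤ := by
    rw [setLIntegral_congr_fun measurableSet_Ioo (fun t ht => by
      rw [abs_of_pos ht.1])]
    exact hIoo.setLIntegral_lt_top
  have hmp : MeasurePreserving (fun x : ℝ => -x) volume volume :=
    Measure.measurePreserving_neg _
  have hemb : MeasurableEmbedding (fun x : ℝ => -x) :=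
    (Homeomorph.neg ℝ).measurableEmbedding
  have hcomp := hmp.setLIntegral_comp_emb hemb
    (fun t => ENNReal.ofReal (K * |t| ^ p)) (Set.Ioo (0:ℝ) 1)
  have himg : (fun x : ℝ => -x) '' Set.Ioo (0:ℝ) 1 = Set.Ioo (-1:ℝ) 0 := by
    rw [show (fun x : ℝ => -x) = Neg.neg from rfl, Set.image_neg_Ioo]
    norm_num
  rw [himg] at hcomp
  simp only [abs_neg] at hcomp
  have hneg : (∫⁻ t in Set.Ioo (-1:ℝ) 0, ENNReal.ofReal (K * |t| ^ p)) < ⊤ := by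
    rw [← hcomp]; exact hpos
  have hsplit : Set.Ioo (-1:ℝ) 1 = Set.Ioo (-1:ℝ) 0 ∪ Set.Ico (0:ℝ) 1 :=
    (Set.Ioo_union_Ico_eq_Ioo (by norm_num) (by norm_num)).symm
  have hIco : (∫⁻ t in Set.Ico (0:ℝ) 1, ENNReal.ofReal (K * |t| ^ p)) < ⊤ := by
    rw [← Measure.restrict_congr_set Ioo_ae_eq_Ico]
    exact hpos
  calc (∫⁻ t in Set.Ioo (-1:ℝ) 1, ENNReal.ofReal (K * |t| ^ p))
      = ∫⁻ t in Set.Ioo (-1:ℝ) 0 ∪ Set.Ico (0:ℝ) 1, ENNReal.ofReal (K * |t| ^ p) := by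
        rw [hsplit]
    _ ≤ (∫⁻ t in Set.Ioo (-1:ℝ) 0, ENNReal.ofReal (K * |t| ^ p))
        + ∫⁻ t in Set.Ico (0:ℝ) 1, ENNReal.ofReal (K * |t| ^ p) := lintegral_union_le _ _ _
    _ < ⊤ := ENNReal.add_lt_top.2 ⟨hneg, hIco⟩
/-- Integrability over the cone neighborhood of the fractal: if `σ > -(d - 𝔇)` with
`𝔇 = (d-1) log 2 / log(1/l)`, then `∫_{(-1,1)^d} |z_d|^σ 1_{M₄}(z) dz < ∞`, where
`M₄ = {z : d(z̄, C_l^{d-1}) ≤ 4|z_d|}`. -/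
theorem stmt_16 (d : ℕ) (hd : 2 ≤ d) (l : ℝ) (hl : l ∈ Set.Ioo (0:ℝ) (1/2)) (σ : ℝ)
    (hσ : -((d:ℝ) - ((d:ℝ) - 1) * Real.log 2 / Real.log (1/l)) < σ) :
    (∫⁻ z in {z : (Fin (d-1) → ℝ) × ℝ | (∀ i, |z.1 i| < 1) ∧ |z.2| < 1},
      ENNReal.ofReal (|z.2| ^ σ *
        (if Metric.infDist z.1 {y : Fin (d-1) → ℝ | ∀ i, y i ∈ cantorSetMid l} ≤ 4 * |z.2|
          then (1:ℝ) else 0))) < ⊤ := by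
  classical
  set D : ℝ := Real.log 2 / Real.log (1/l) with hD
  set P : Set (Fin (d-1) → ℝ) := {y : Fin (d-1) → ℝ | ∀ i, y i ∈ cantorSetMid l} with hPdef
  set p : ℝ := σ + (1 - D) * ((d-1 : ℕ) : ℝ) with hp
  set K : ℝ := (9 * 4 ^ (1 - D)) ^ (d-1) with hK
  have hmcast : ((d-1 : ℕ) : ℝ) = (d:ℝ) - 1 := by
    have : 1 ≤ d := by omega
    push_cast [Nat.cast_sub this]
    ring
  have hp1 : -1 < p := by
    rw [hp, hmcast]
    have hrw : ((d:ℝ) - 1) * Real.log 2 / Real.log (1/l) = ((d:ℝ) - 1) * D := by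
      rw [hD]; ring
    rw [hrw] at hσ
    nlinarith [hσ]
  set T : Set ((Fin (d-1) → ℝ) × ℝ) :=
    {z | Metric.infDist z.1 P ≤ 4 * |z.2| ∧ |z.2| < 1} with hT
  have hTmeas : MeasurableSet T := by
    rw [hT, Set.setOf_and]
    refine MeasurableSet.inter ?_ ?_
    · exact (isClosed_le (continuous_infDist_pt P |>.comp continuous_fst)
        (continuous_const.mul (continuous_abs.comp continuous_snd))).measurableSet
    · exact measurableSet_lt ((continuous_abs.comp continuous_snd).measurable)
        measurable_const
  set g : (Fin (d-1) → ℝ) × ℝ → ℝ≥0∞ :=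
    T.indicator (fun z => ENNReal.ofReal (|z.2| ^ σ)) with hg
  have hginner : Measurable (fun z : (Fin (d-1) → ℝ) × ℝ => ENNReal.ofReal (|z.2| ^ σ)) := by
    fun_prop
  have hgmeas : Measurable g := hginner.indicator hTmeas
  have hS : MeasurableSet {z : (Fin (d-1) → ℝ) × ℝ | (∀ i, |z.1 i| < 1) ∧ |z.2| < 1} := by
    rw [Set.setOf_and]
    refine MeasurableSet.inter ?_ ?_
    · rw [Set.setOf_forall]
      exact MeasurableSet.iInter fun i => measurableSet_lt
        ((continuous_abs.comp ((continuous_apply i).comp continuous_fst)).measurable)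
        measurable_const
    · exact measurableSet_lt ((continuous_abs.comp continuous_snd).measurable)
        measurable_const
  -- Step 1: bound the set integral by the integral of g
  have h1 : (∫⁻ z in {z : (Fin (d-1) → ℝ) × ℝ | (∀ i, |z.1 i| < 1) ∧ |z.2| < 1},
      ENNReal.ofReal (|z.2| ^ σ *
        (if Metric.infDist z.1 P ≤ 4 * |z.2| then (1:ℝ) else 0))) ≤ ∫⁻ z, g z := by
    rw [← lintegral_indicator hS]
    refine lintegral_mono fun z => ?_
    by_cases hzS : z ∈ {z : (Fin (d-1) → ℝ) × ℝ | (∀ i, |z.1 i| < 1) ∧ |z.2| < 1}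
    · rw [Set.indicator_of_mem hzS]
      by_cases hcond : Metric.infDist z.1 P ≤ 4 * |z.2|
      · have hzT : z ∈ T := ⟨hcond, hzS.2⟩
        rw [if_pos hcond, mul_one, hg, Set.indicator_of_mem hzT]
      · rw [if_neg hcond, mul_zero, ENNReal.ofReal_zero]
        exact zero_le
    · rw [Set.indicator_of_notMem hzS]
      exact zero_le
  -- Step 2: Fubini
  have h2 : (∫⁻ z, g z) = ∫⁻ t : ℝ, ∫⁻ x : Fin (d-1) → ℝ, g (x, t) := by
    rw [Measure.volume_eq_prod, lintegral_prod_symm g hgmeas.aemeasurable]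
  -- Step 3: pointwise bound on inner integral
  set H : ℝ → ℝ≥0∞ :=
    (Set.Ioo (-1:ℝ) 1).indicator (fun t => ENNReal.ofReal (K * |t| ^ p)) with hH
  have key : ∀ t : ℝ, t ≠ 0 → (∫⁻ x : Fin (d-1) → ℝ, g (x, t)) ≤ H t := by
    intro t ht
    by_cases ht1 : |t| < 1
    · have habs : (0 : ℝ) < |t| := abs_pos.2 ht
      have hgx : (fun x : Fin (d-1) → ℝ => g (x, t))
          = Set.indicator {x : Fin (d-1) → ℝ | Metric.infDist x P ≤ 4 * |t|}
            (fun _ => ENNReal.ofReal (|t| ^ σ)) := by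
        funext x
        by_cases hc : Metric.infDist x P ≤ 4 * |t|
        · rw [hg, Set.indicator_of_mem (show (x, t) ∈ T from ⟨hc, ht1⟩),
            Set.indicator_of_mem
              (show x ∈ {x : Fin (d-1) → ℝ | Metric.infDist x P ≤ 4 * |t|} from hc)]
        · rw [hg, Set.indicator_of_notMem (show (x, t) ∉ T from fun h => hc h.1),
            Set.indicator_of_notMem
              (show x ∉ {x : Fin (d-1) → ℝ | Metric.infDist x P ≤ 4 * |t|} from hc)]
      have hAmeas : MeasurableSet {x : Fin (d-1) → ℝ | Metric.infDist x P ≤ 4 * |t|} :=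
        (isClosed_le (continuous_infDist_pt P) continuous_const).measurableSet
      have hvol : volume {x : Fin (d-1) → ℝ | Metric.infDist x P ≤ 4 * |t|}
          ≤ (ENNReal.ofReal (9 * (4 * |t|) ^ (1 - D))) ^ (d-1) :=
        pi_nbhd_measure_le hl (by linarith) (by linarith)
      have hreal : |t| ^ σ * (9 * (4 * |t|) ^ (1 - D)) ^ (d-1) = K * |t| ^ p := by
        have h4t : (4 * |t|) ^ (1 - D) = 4 ^ (1 - D) * |t| ^ (1 - D) :=
          Real.mul_rpow (by norm_num) (abs_nonneg t)
        calc |t| ^ σ * (9 * (4 * |t|) ^ (1 - D)) ^ (d-1)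
            = (9 * 4 ^ (1 - D)) ^ (d-1) * (|t| ^ σ * ((|t| ^ (1 - D)) ^ (d-1))) := by
              rw [h4t]; ring
          _ = (9 * 4 ^ (1 - D)) ^ (d-1) * (|t| ^ σ * |t| ^ ((1 - D) * ((d-1:ℕ):ℝ))) := by
              rw [← Real.rpow_natCast (|t| ^ (1 - D)) (d-1), ← Real.rpow_mul (abs_nonneg t)]
          _ = K * |t| ^ p := by
              rw [← Real.rpow_add habs, hK, hp]
      have hHt : H t = ENNReal.ofReal (K * |t| ^ p) := by
        rw [hH, Set.indicator_of_mem (Set.mem_Ioo.2 (abs_lt.1 ht1))]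
      calc (∫⁻ x : Fin (d-1) → ℝ, g (x, t))
          = ENNReal.ofReal (|t| ^ σ)
            * volume {x : Fin (d-1) → ℝ | Metric.infDist x P ≤ 4 * |t|} := by
            rw [hgx, lintegral_indicator_const hAmeas]
        _ ≤ ENNReal.ofReal (|t| ^ σ) * (ENNReal.ofReal (9 * (4 * |t|) ^ (1 - D))) ^ (d-1) :=
            mul_le_mul_right hvol _
        _ = ENNReal.ofReal (|t| ^ σ * (9 * (4 * |t|) ^ (1 - D)) ^ (d-1)) := by
            rw [← ENNReal.ofReal_pow (by positivity), ← ENNReal.ofReal_mul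
              (Real.rpow_nonneg (abs_nonneg t) σ)]
        _ = H t := by rw [hreal, hHt]
    · have hgz : ∀ x : Fin (d-1) → ℝ, g (x, t) = 0 := fun x =>
        Set.indicator_of_notMem (fun h => ht1 h.2) _
      simp only [hgz, lintegral_const, zero_mul]
      exact zero_le
  have hae : ∀ᵐ t : ℝ, (∫⁻ x : Fin (d-1) → ℝ, g (x, t)) ≤ H t := by
    have h0 : ∀ᵐ t : ℝ, t ≠ 0 := by
      rw [ae_iff]
      simp [measure_singleton]
    exact h0.mono fun t ht => key t ht
  have h3 : (∫⁻ t : ℝ, ∫⁻ x : Fin (d-1) → ℝ, g (x, t)) ≤ ∫⁻ t : ℝ, H t :=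
    lintegral_mono_ae hae
  have h4 : (∫⁻ t : ℝ, H t) < ⊤ := by
    rw [hH, lintegral_indicator measurableSet_Ioo]
    exact lintegral_abs_rpow_lt_top hp1 K
  calc (∫⁻ z in {z : (Fin (d-1) → ℝ) × ℝ | (∀ i, |z.1 i| < 1) ∧ |z.2| < 1},
      ENNReal.ofReal (|z.2| ^ σ *
        (if Metric.infDist z.1 P ≤ 4 * |z.2| then (1:ℝ) else 0)))
      ≤ ∫⁻ z, g z := h1
    _ = ∫⁻ t : ℝ, ∫⁻ x : Fin (d-1) → ℝ, g (x, t) := h2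
    _ ≤ ∫⁻ t : ℝ, H t := h3
    _ < ⊤ := h4
end
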